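/- arXiv:1802.10521 — 5 statements merged into one kernel-verified Lean document; each statement's English description precedes it below -/
import Mathlib

section
/- Let n be a squarefree positive integer. Then for every k ≥ 0, (μ ⋆ Λ^{⋆k})(n) = (-1)^k μ(n) ∑_{p_1 ⋯ p_k | n} log p_1 ⋯ log p_k, where the sum runs over ordered k-tuples of distinct primes p_1, …, p_k whose product divides n. -/
open ArithmeticFunction Finset

open scoped ArithmeticFunction.Moebius

/-!
On squarefree integers `Λ` is supported on the prime divisors, so for squarefree `n`
`(f * Λ) n = ∑_{p ∣ n} f (n / p) log p`, and `n / p` is again squarefree with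
`μ (n / p) = -μ n` and one prime factor fewer. Peeling off one factor of `Λ` at a time thus
produces the first entry `p₁` of the tuple together with a sign, and the remaining
`k - 1` entries are distinct primes of `n / p₁`.
-/

section InjectiveTuples

variable {α : Type*} [DecidableEq α]

def injectiveTuples (s : Finset α) (k : ℕ) : Finset (Fin k → α) :=
  {f ∈ Fintype.piFinset fun _ ↦ s | Function.Injective f}

lemma mem_injectiveTuples {s : Finset α} {k : ℕ} {f : Fin k → α} :
    f ∈ injectiveTuples s k ↔ (∀ i, f i ∈ s) ∧ Function.Injective f := by
  simp [injectiveTuples]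

lemma injectiveTuples_zero (s : Finset α) : injectiveTuples s 0 = univ :=
  eq_univ_of_forall fun f ↦
    mem_injectiveTuples.2 ⟨finZeroElim, Function.injective_of_subsingleton f⟩

lemma cons_mem_injectiveTuples_succ {s : Finset α} {k : ℕ} {a : α} {f : Fin k → α} :
    Fin.cons a f ∈ injectiveTuples s (k + 1) ↔
      a ∈ s ∧ f ∈ injectiveTuples (s.erase a) k := by
  simp only [mem_injectiveTuples, Fin.forall_fin_succ, Fin.cons_zero, Fin.cons_succ,
    Fin.cons_injective_iff, mem_erase, Set.mem_range, not_exists]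
  grind

lemma sum_injectiveTuples_succ {M : Type*} [CommSemiring M] (s : Finset α) (k : ℕ)
    (g : α → M) :
    ∑ f ∈ injectiveTuples s (k + 1), ∏ i, g (f i) =
      ∑ a ∈ s, g a * ∑ f ∈ injectiveTuples (s.erase a) k, ∏ i, g (f i) := by
  simp only [mul_sum]
  rw [sum_sigma']
  refine sum_nbij' (fun f ↦ ⟨f 0, Fin.tail f⟩) (fun f ↦ Fin.cons f.1 f.2) ?_ ?_ ?_ ?_ ?_
  · intro f hf
    rw [← Fin.cons_self_tail f, cons_mem_injectiveTuples_succ] at hf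
    simpa using hf
  · rintro ⟨a, f⟩ hf
    rw [cons_mem_injectiveTuples_succ]
    simpa using hf
  · intro f _
    exact Fin.cons_self_tail f
  · rintro ⟨a, f⟩ _
    simp
  · intro f _
    simp [Fin.prod_univ_succ, Fin.tail]

end InjectiveTuples

namespace Nat

lemma primeFactors_div_of_squarefree {n p : ℕ} (hn : Squarefree n) (hp : p.Prime)
    (hpn : p ∣ n) : (n / p).primeFactors = n.primeFactors.erase p := by
  have := primeFactors_div_gcd hn hp.ne_zero
  rwa [gcd_eq_right hpn, hp.primeFactors, sdiff_singleton_eq_erase] at this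

lemma mem_injectiveTuples_primeFactors {n k : ℕ} (hn : n ≠ 0) {f : Fin k → ℕ} :
    f ∈ injectiveTuples n.primeFactors k ↔
      (∀ i, (f i).Prime) ∧ Function.Injective f ∧ ∏ i, f i ∣ n := by
  simp only [mem_injectiveTuples, mem_primeFactors_of_ne_zero hn, forall_and]
  refine ⟨fun ⟨⟨hprime, hdvd⟩, hinj⟩ ↦ ⟨hprime, hinj, ?_⟩, fun ⟨hprime, hinj, hdvd⟩ ↦
    ⟨⟨hprime, fun i ↦ (dvd_prod_of_mem f (mem_univ i)).trans hdvd⟩, hinj⟩⟩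
  calc ∏ i, f i = ∏ p ∈ univ.image f, p :=
        (prod_image (f := id) fun i _ j _ h ↦ hinj h).symm
    _ ∣ ∏ p ∈ n.primeFactors, p := prod_dvd_prod_of_subset _ _ _ fun p hp ↦ by
        obtain ⟨i, -, rfl⟩ := mem_image.1 hp
        exact (mem_primeFactors_of_ne_zero hn).2 ⟨hprime i, hdvd i⟩
    _ ∣ n := prod_primeFactors_dvd n

end Nat

namespace ArithmeticFunction

lemma moebius_div_prime_of_squarefree {n p : ℕ} (hn : Squarefree n) (hp : p.Prime)
    (hpn : p ∣ n) : μ (n / p) = -μ n := by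
  obtain ⟨m, rfl⟩ := hpn
  rw [Nat.mul_div_cancel_left m hp.pos,
    isMultiplicative_moebius.map_mul_of_coprime (Nat.coprime_of_squarefree_mul hn),
    moebius_apply_prime hp, neg_one_mul, neg_neg]

lemma mul_vonMangoldt_apply_of_squarefree (f : ArithmeticFunction ℝ) {n : ℕ}
    (hn : Squarefree n) :
    (f * Λ) n = ∑ p ∈ n.primeFactors, f (n / p) * Real.log p := by
  rw [mul_apply, Nat.sum_divisorsAntidiagonal' fun a b ↦ f a * Λ b,
    Nat.primeFactors_eq_to_filter_divisors_prime, sum_filter]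
  refine sum_congr rfl fun d hd ↦ ?_
  split_ifs with hd_prime
  · rw [vonMangoldt_apply_prime hd_prime]
  · have : ¬IsPrimePow d := fun h ↦ hd_prime <| Nat.squarefree_and_prime_pow_iff_prime.1
      ⟨hn.squarefree_of_dvd (Nat.dvd_of_mem_divisors hd), h⟩
    rw [vonMangoldt_eq_zero_iff.2 this, mul_zero]

theorem moebius_mul_vonMangoldt_pow_apply_of_squarefree (k : ℕ) {n : ℕ} (hn : Squarefree n) :
    ((μ : ArithmeticFunction ℝ) * Λ ^ k) n =
      (-1) ^ k * μ n * ∑ f ∈ injectiveTuples n.primeFactors k, ∏ i, Real.log (f i) := by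
  induction k generalizing n with
  | zero => simp [injectiveTuples_zero]
  | succ k ih =>
    rw [pow_succ, ← mul_assoc, mul_vonMangoldt_apply_of_squarefree _ hn,
      sum_injectiveTuples_succ _ _ fun p : ℕ ↦ Real.log p, mul_sum]
    refine sum_congr rfl fun p hp ↦ ?_
    obtain ⟨hp, hpn, -⟩ := Nat.mem_primeFactors.1 hp
    rw [ih (hn.squarefree_of_dvd (Nat.div_dvd_of_dvd hpn)),
      moebius_div_prime_of_squarefree hn hp hpn, Nat.primeFactors_div_of_squarefree hn hp hpn]
    push_cast
    ring

end ArithmeticFunction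

open scoped Classical in
/-- For `n` squarefree and `k ≥ 0`,
`(μ ⋆ Λ^{⋆k})(n) = (-1)^k μ(n) ∑_{p_1 ⋯ p_k ∣ n} log p_1 ⋯ log p_k`,
the sum running over ordered `k`-tuples of distinct primes whose product
divides `n`. -/
theorem moebius_mul_vonMangoldt_pow_of_squarefree (n : ℕ) (hn : Squarefree n) (k : ℕ) :
    ((↑(ArithmeticFunction.moebius) : ArithmeticFunction ℝ) *
        ArithmeticFunction.vonMangoldt ^ k) n =
      (-1 : ℝ) ^ k * (ArithmeticFunction.moebius n : ℝ) *
        ∑ p ∈ Finset.univ.filter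
            (fun p : Fin k → n.divisors =>
              (∀ i, ((p i : ℕ)).Prime) ∧ Function.Injective p ∧
                (∏ i, (p i : ℕ)) ∣ n),
          ∏ i, Real.log (p i : ℕ) := by
  rw [moebius_mul_vonMangoldt_pow_apply_of_squarefree k hn]
  congr 1
  symm
  refine sum_bij (fun p _ ↦ Subtype.val ∘ p) (fun p hp ↦ ?_) (fun p _ q _ h ↦ ?_)
    (fun f hf ↦ ?_) fun _ _ ↦ rfl
  · obtain ⟨-, hprime, hinj, hdvd⟩ := mem_filter.1 hp
    exact (Nat.mem_injectiveTuples_primeFactors hn.ne_zero).2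
      ⟨hprime, (Subtype.val_injective.of_comp_iff _).2 hinj, hdvd⟩
  · exact funext fun i ↦ Subtype.ext (congrFun h i)
  · obtain ⟨hprime, hinj, hdvd⟩ := (Nat.mem_injectiveTuples_primeFactors hn.ne_zero).1 hf
    have hf_dvd i : f i ∣ n := (dvd_prod_of_mem f (mem_univ i)).trans hdvd
    refine ⟨fun i ↦ ⟨f i, Nat.mem_divisors.2 ⟨hf_dvd i, hn.ne_zero⟩⟩,
      mem_filter.2 ⟨mem_univ _, hprime, fun i j h ↦ hinj (congrArg Subtype.val h), hdvd⟩, rfl⟩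
end

section
/- Fix an integer k ≥ 2. For a positive integer d, define a_d = (μ ⋆ Λ^{⋆2})(d) and b_d = μ(d) ∑_{q_1 ≠ q_2, q_1 q_2 | d} (log q_1)(log q_2) (sum over ordered pairs of distinct primes dividing d). Then the difference c_d = a_d − b_d vanishes unless d = p^k m with p prime, k ≥ 2, and m squarefree coprime to p, in which case c_d = (log p)^2 μ(m). -/
open ArithmeticFunction Finset

/-- `a d = (μ ⋆ Λ ⋆ Λ)(d)`. -/
noncomputable def aCoeff (d : ℕ) : ℝ :=
  ((↑(ArithmeticFunction.moebius) : ArithmeticFunction ℝ) *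
    ArithmeticFunction.vonMangoldt * ArithmeticFunction.vonMangoldt) d

/-- `b d = μ(d) ∑_{(q₁,q₂) distinct primes dividing d} (log q₁)(log q₂)`. -/
noncomputable def bCoeff (d : ℕ) : ℝ :=
  (ArithmeticFunction.moebius d : ℝ) *
    ∑ q₁ ∈ d.primeFactors, ∑ q₂ ∈ d.primeFactors \ {q₁},
      Real.log q₁ * Real.log q₂

/-!
Since `μ ⋆ Λ = -μ · log`, we have `a_d = -∑_{v ∣ d} μ(d/v) log(d/v) Λ(v)`, and only the prime
powers `v = q^j` with `d/v` squarefree contribute. For squarefree `d` these are the primes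
`q ∣ d`, and `μ(d/q) = -μ(d)`, `log(d/q) = ∑_{r ∣ d, r ≠ q} log r` turn the sum into `b_d`.
Otherwise `b_d = 0`: if the squares of two distinct primes divide `d`, no term survives, and
for `d = p^k m` only `v = p^(k-1), p^k` do, contributing
`μ(m) log p (log p + log m) - μ(m) log p log m = (log p)^2 μ(m)`.
-/

open scoped ArithmeticFunction.Moebius ArithmeticFunction.zeta

namespace ArithmeticFunction

theorem moebius_mul_vonMangoldt :
    (μ : ArithmeticFunction ℝ) * Λ = -pmul (μ : ArithmeticFunction ℝ) log := by
  have h : pmul (μ : ArithmeticFunction ℝ) log * ζ = -Λ := by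
    ext n
    rw [coe_mul_zeta_apply]
    simpa [pmul_apply, log_apply] using sum_moebius_mul_log_eq
  calc (μ : ArithmeticFunction ℝ) * Λ = -(pmul (μ : ArithmeticFunction ℝ) log * (ζ * μ)) := by
        rw [← mul_assoc, h]; ring
    _ = -pmul (μ : ArithmeticFunction ℝ) log := by rw [coe_zeta_mul_coe_moebius, mul_one]

theorem moebius_prime_mul {p m : ℕ} (hp : p.Prime) (hpm : ¬ p ∣ m) : μ (p * m) = -μ m := by
  rw [isMultiplicative_moebius.map_mul_of_coprime (hp.coprime_iff_not_dvd.mpr hpm),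
    moebius_apply_prime hp, neg_one_mul]

theorem moebius_div_of_mem_primeFactors {d q : ℕ} (hd : Squarefree d) (hq : q ∈ d.primeFactors) :
    μ (d / q) = -μ d := by
  have hqd : q * (d / q) = d := Nat.mul_div_cancel' (Nat.dvd_of_mem_primeFactors hq)
  have hq' := Nat.prime_of_mem_primeFactors hq
  have hcop : q.Coprime (d / q) := Nat.coprime_of_squarefree_mul (by rwa [hqd])
  have h := moebius_prime_mul hq' (hq'.coprime_iff_not_dvd.mp hcop)
  rw [hqd] at h
  rw [h, neg_neg]

end ArithmeticFunction

theorem Real.log_natCast_eq_sum_primeFactors {n : ℕ} (hn : Squarefree n) :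
    Real.log n = ∑ p ∈ n.primeFactors, Real.log p := by
  conv_lhs => rw [← Nat.prod_primeFactors_of_squarefree hn]
  push_cast
  exact Real.log_prod fun p hp => by exact_mod_cast (Nat.prime_of_mem_primeFactors hp).ne_zero

theorem Real.log_natCast_div_of_mem_primeFactors {d q : ℕ} (hd : Squarefree d)
    (hq : q ∈ d.primeFactors) :
    Real.log (d / q : ℕ) = ∑ r ∈ d.primeFactors \ {q}, Real.log r := by
  have hqd := Nat.dvd_of_mem_primeFactors hq
  have hq' := Nat.prime_of_mem_primeFactors hq
  have hpf := Nat.primeFactors_div_gcd hd hq'.ne_zero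
  rw [Nat.gcd_eq_right hqd, hq'.primeFactors] at hpf
  rw [Real.log_natCast_eq_sum_primeFactors (hd.squarefree_of_dvd (Nat.div_dvd_of_dvd hqd)), hpf]

theorem mul_self_dvd_pow {M : Type*} [Monoid M] (a : M) {k : ℕ} (hk : 2 ≤ k) : a * a ∣ a ^ k := by
  rw [← sq]
  exact pow_dvd_pow a hk

theorem Nat.Prime.eq_of_mul_self_dvd_of_squarefree_div {s q j d : ℕ} (hs : s.Prime)
    (hq : q.Prime) (hqd : q ^ j ∣ d) (hsq : Squarefree (d / q ^ j)) (hsd : s * s ∣ d) : s = q := by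
  by_contra hne
  have hcop : (s * s).Coprime (q ^ j) :=
    have h := (Nat.coprime_primes hs hq).mpr hne |>.pow_right j
    h.mul_left h
  exact hs.not_isUnit (hsq s (hcop.dvd_of_dvd_mul_right (by rwa [Nat.div_mul_cancel hqd])))

theorem aCoeff_eq_sum_divisors (d : ℕ) :
    aCoeff d = -∑ v ∈ d.divisors, (μ (d / v) : ℝ) * Real.log (d / v : ℕ) * Λ v := by
  rw [aCoeff, mul_apply, Nat.sum_divisorsAntidiagonal'
    (f := fun a b => ((μ : ArithmeticFunction ℝ) * Λ) a * Λ b), moebius_mul_vonMangoldt,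
    ← sum_neg_distrib]
  simp [pmul_apply, log_apply]

theorem aCoeff_eq_sum_of_subset {d : ℕ} {S : Finset ℕ} (hS : S ⊆ d.divisors)
    (hsupp : ∀ q j, q.Prime → j ≠ 0 → q ^ j ∣ d → Squarefree (d / q ^ j) → q ^ j ∈ S) :
    aCoeff d = -∑ v ∈ S, (μ (d / v) : ℝ) * Real.log (d / v : ℕ) * Λ v := by
  rw [aCoeff_eq_sum_divisors, sum_subset hS]
  intro v hv hvS
  rcases eq_or_ne (Λ v) 0 with hΛ | hΛ
  · rw [hΛ, mul_zero]
  obtain ⟨q, j, hq, hj, rfl⟩ := vonMangoldt_ne_zero_iff.mp hΛ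
  have hnsq : ¬ Squarefree (d / q ^ j) := fun hsq =>
    hvS (hsupp q j (Nat.prime_iff.mpr hq) hj.ne' (Nat.dvd_of_mem_divisors hv) hsq)
  simp [moebius_eq_zero_of_not_squarefree hnsq]

theorem aCoeff_eq_bCoeff_of_squarefree {d : ℕ} (hd : Squarefree d) : aCoeff d = bCoeff d := by
  rw [aCoeff_eq_sum_of_subset (S := d.primeFactors), bCoeff, mul_sum, ← sum_neg_distrib]
  · refine sum_congr rfl fun q hq => ?_
    rw [moebius_div_of_mem_primeFactors hd hq, Real.log_natCast_div_of_mem_primeFactors hd hq,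
      vonMangoldt_apply_prime (Nat.prime_of_mem_primeFactors hq), ← mul_sum]
    push_cast
    ring
  · exact fun q hq => Nat.mem_divisors.mpr ⟨Nat.dvd_of_mem_primeFactors hq, hd.ne_zero⟩
  · intro q j hq hj hqd _
    obtain rfl : j = 1 := ((Nat.squarefree_pow_iff hq.ne_one hj).mp (hd.squarefree_of_dvd hqd)).2
    rw [pow_one] at hqd ⊢
    exact Nat.mem_primeFactors.mpr ⟨hq, hqd, hd.ne_zero⟩

theorem aCoeff_eq_zero_of_mul_self_dvd {d p r : ℕ} (hp : p.Prime) (hr : r.Prime) (hpr : p ≠ r)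
    (hpd : p * p ∣ d) (hrd : r * r ∣ d) : aCoeff d = 0 := by
  rw [aCoeff_eq_sum_of_subset (S := ∅) (empty_subset _), sum_empty, neg_zero]
  intro q j hq _ hqd hsq
  exact absurd ((hp.eq_of_mul_self_dvd_of_squarefree_div hq hqd hsq hpd).trans
    (hr.eq_of_mul_self_dvd_of_squarefree_div hq hqd hsq hrd).symm) hpr

theorem aCoeff_prime_pow_mul {p k m : ℕ} (hp : p.Prime) (hk : 2 ≤ k) (hm : Squarefree m)
    (hpm : ¬ p ∣ m) : aCoeff (p ^ k * m) = Real.log p ^ 2 * μ m := by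
  obtain ⟨i, rfl⟩ : ∃ i, k = i + 1 := ⟨k - 1, by omega⟩
  have hdiv : ∀ j ≤ i + 1, p ^ (i + 1) * m / p ^ j = p ^ (i + 1 - j) * m := fun j hj => by
    refine Nat.div_eq_of_eq_mul_right (pow_pos hp.pos j) ?_
    rw [← mul_assoc, ← pow_add, Nat.add_sub_cancel' hj]
  rw [aCoeff_eq_sum_of_subset (S := {p ^ i, p ^ (i + 1)})]
  · rw [sum_pair (Nat.pow_right_injective hp.two_le |>.ne (by omega)), hdiv i (by omega),
      hdiv (i + 1) le_rfl, Nat.add_sub_cancel_left, Nat.sub_self, pow_one, pow_zero, one_mul,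
      moebius_prime_mul hp hpm, vonMangoldt_apply_pow (by omega), vonMangoldt_apply_pow (by omega),
      vonMangoldt_apply_prime hp, Nat.cast_mul,
      Real.log_mul (by exact_mod_cast hp.ne_zero) (by exact_mod_cast hm.ne_zero)]
    push_cast
    ring
  · have hd0 : p ^ (i + 1) * m ≠ 0 := mul_ne_zero (pow_ne_zero _ hp.ne_zero) hm.ne_zero
    simp only [insert_subset_iff, singleton_subset_iff, Nat.mem_divisors]
    exact ⟨⟨(pow_dvd_pow p (by omega)).mul_right m, hd0⟩, ⟨dvd_mul_right _ _, hd0⟩⟩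
  · intro q j hq hj hqd hsq
    obtain rfl := hp.eq_of_mul_self_dvd_of_squarefree_div hq hqd hsq
      ((mul_self_dvd_pow p hk).mul_right m)
    have hj : j ≤ i + 1 := (Nat.pow_dvd_pow_iff_le_right hp.one_lt).mp
      (((hp.coprime_iff_not_dvd.mpr hpm).pow_left j).dvd_of_dvd_mul_right hqd)
    rw [hdiv j hj] at hsq
    have hle : i + 1 - j ≤ 1 := by
      by_contra! h
      exact hp.not_isUnit (hsq.of_mul_left p (mul_self_dvd_pow p h))
    obtain rfl | rfl : j = i ∨ j = i + 1 := by omega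
    all_goals simp

theorem bCoeff_eq_zero_of_not_squarefree {d : ℕ} (hd : ¬ Squarefree d) : bCoeff d = 0 := by
  rw [bCoeff, moebius_eq_zero_of_not_squarefree hd, Int.cast_zero, zero_mul]

theorem Nat.exists_prime_pow_mul_or_two_mul_self_dvd {d : ℕ} (hd0 : d ≠ 0) (hd : ¬ Squarefree d) :
    (∃ p k m : ℕ, p.Prime ∧ 2 ≤ k ∧ Squarefree m ∧ ¬ p ∣ m ∧ d = p ^ k * m) ∨
      ∃ p r : ℕ, p.Prime ∧ r.Prime ∧ p ≠ r ∧ p * p ∣ d ∧ r * r ∣ d := by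
  obtain ⟨p, hp, hpp⟩ : ∃ p, p.Prime ∧ p * p ∣ d := by
    simpa [Nat.squarefree_iff_prime_squarefree] using hd
  have hpm : ¬ p ∣ ordCompl[p] d := Nat.not_dvd_ordCompl hp hd0
  by_cases hm : Squarefree (ordCompl[p] d)
  · refine .inl ⟨p, d.factorization p, _, hp, ?_, hm, hpm,
      (Nat.ordProj_mul_ordCompl_eq_self d p).symm⟩
    exact (hp.pow_dvd_iff_le_factorization hd0).mp (by rwa [sq])
  · obtain ⟨r, hr, hrr⟩ : ∃ r, r.Prime ∧ r * r ∣ ordCompl[p] d := by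
      simpa [Nat.squarefree_iff_prime_squarefree] using hm
    refine .inr ⟨p, r, hp, hr, ?_, hpp, hrr.trans (Nat.ordCompl_dvd d p)⟩
    rintro rfl
    exact hpm ((dvd_mul_left p p).trans hrr)

theorem cCoeff_characterization_general (d : ℕ) :
    (aCoeff d - bCoeff d ≠ 0 →
      ∃ p k m : ℕ, p.Prime ∧ 2 ≤ k ∧ Squarefree m ∧ ¬ p ∣ m ∧ d = p ^ k * m) ∧
    (∀ p k m : ℕ, p.Prime → 2 ≤ k → Squarefree m → ¬ p ∣ m → d = p ^ k * m →
      aCoeff d - bCoeff d = (Real.log p) ^ 2 * (ArithmeticFunction.moebius m : ℝ)) := by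
  refine ⟨fun hc => ?_, ?_⟩
  · by_cases hsf : Squarefree d
    · exact absurd (sub_eq_zero.mpr (aCoeff_eq_bCoeff_of_squarefree hsf)) hc
    rcases eq_or_ne d 0 with rfl | hd0
    · simp [aCoeff, bCoeff] at hc
    refine (Nat.exists_prime_pow_mul_or_two_mul_self_dvd hd0 hsf).resolve_right ?_
    rintro ⟨p, r, hp, hr, hpr, hpd, hrd⟩
    rw [aCoeff_eq_zero_of_mul_self_dvd hp hr hpr hpd hrd, bCoeff_eq_zero_of_not_squarefree hsf,
      sub_zero] at hc
    exact hc rfl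
  · rintro p k m hp hk hm hpm rfl
    have hnsf : ¬ Squarefree (p ^ k * m) := fun h =>
      hp.not_isUnit (h p ((mul_self_dvd_pow p hk).mul_right m))
    rw [aCoeff_prime_pow_mul hp hk hm hpm, bCoeff_eq_zero_of_not_squarefree hnsf, sub_zero]

/-- The difference `c d = a d − b d` vanishes unless `d = p^k m` with `p`
prime, `k ≥ 2`, and `m` squarefree coprime to `p`, in which case
`c d = (log p)^2 μ(m)`. -/
theorem cCoeff_characterization (d : ℕ) (hd : 1 ≤ d) :
    (aCoeff d - bCoeff d ≠ 0 →
      ∃ p k m : ℕ, p.Prime ∧ 2 ≤ k ∧ Squarefree m ∧ ¬ p ∣ m ∧ d = p ^ k * m) ∧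
    (∀ p k m : ℕ, p.Prime → 2 ≤ k → Squarefree m → ¬ p ∣ m → d = p ^ k * m →
      aCoeff d - bCoeff d = (Real.log p) ^ 2 * (ArithmeticFunction.moebius m : ℝ)) :=
  cCoeff_characterization_general d
end

section
/- For every k ≥ 1, the function Λ_k can be written as a finite integer linear combination of functions of the form (log^{j_1}·Λ) ⋆ (log^{j_2}·Λ) ⋆ ⋯ ⋆ (log^{j_R}·Λ), where 1 ≤ R ≤ k and j_1, …, j_R are nonnegative integers; more precisely, there is a finite family of tuples (c, R, j_1,…,j_R) with integer coefficients c such that Λ_k(n) = ∑ c · ((log^{j_1}Λ) ⋆ ⋯ ⋆ (log^{j_R}Λ))(n) for all n. -/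
open ArithmeticFunction Finset

/-- The generalized von Mangoldt function `Λ_k := μ ⋆ log^k`, where `log^k`
is the pointwise `k`-th power of the logarithm. -/
noncomputable def genVonMangoldt (k : ℕ) : ArithmeticFunction ℝ :=
  (↑(ArithmeticFunction.moebius) : ArithmeticFunction ℝ) *
    (ArithmeticFunction.ppow ArithmeticFunction.log k)

/-- `(log^j·Λ)(n) = (log n)^j Λ(n)` (pointwise multiplication). -/
noncomputable def logPowVonMangoldt (j : ℕ) : ArithmeticFunction ℝ :=
  ⟨fun n => (Real.log n) ^ j * ArithmeticFunction.vonMangoldt n, by simp⟩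

/-!
Multiplication by `log` is a derivation `D` of the Dirichlet ring, since `log (ab) = log a + log b`.
Applying `D` to `μ ⋆ ζ = 1` gives `D μ = -Λ ⋆ μ`, hence `Λ_{k+1} = D Λ_k + Λ ⋆ Λ_k`. As
`D (log^j·Λ) = log^{j+1}·Λ`, the Leibniz rule shows that `D` maps a convolution of `R` factors
`log^j·Λ` to a sum of such convolutions, and `Λ ⋆ ·` adds one factor `log^0·Λ = Λ`;
so by induction `Λ_k` lies in the `ℤ`-span of the convolutions of between `1` and `k` factors.
-/

open scoped ArithmeticFunction.zeta ArithmeticFunction.Moebius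

namespace ArithmeticFunction

theorem sum_apply {R ι : Type*} [AddCommMonoid R] (s : Finset ι) (f : ι → ArithmeticFunction R)
    (n : ℕ) : (∑ i ∈ s, f i) n = ∑ i ∈ s, f i n :=
  map_sum ({ toFun := fun f => f n, map_zero' := zero_apply, map_add' := fun _ _ => add_apply } :
    ArithmeticFunction R →+ R) f s

theorem log_pmul_mul (f g : ArithmeticFunction ℝ) :
    log.pmul (f * g) = log.pmul f * g + f * log.pmul g := by
  ext n
  simp only [pmul_apply, mul_apply, add_apply, log_apply, Finset.mul_sum, ← Finset.sum_add_distrib]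
  refine Finset.sum_congr rfl fun p hp => ?_
  obtain ⟨rfl, hn⟩ := Nat.mem_divisorsAntidiagonal.mp hp
  have h₁ : (p.1 : ℝ) ≠ 0 := by exact_mod_cast left_ne_zero_of_mul hn
  have h₂ : (p.2 : ℝ) ≠ 0 := by exact_mod_cast right_ne_zero_of_mul hn
  rw [Nat.cast_mul, Real.log_mul h₁ h₂]
  ring

noncomputable def logDerivation : Derivation ℝ (ArithmeticFunction ℝ) (ArithmeticFunction ℝ) :=
  Derivation.mk'
    { toFun := log.pmul
      map_add' := fun f g => by ext n; simp [pmul_apply, mul_add]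
      map_smul' := fun c f => by ext n; simp [pmul_apply, mul_left_comm] }
    fun f g => by
      simp only [LinearMap.coe_mk, AddHom.coe_mk, smul_eq_mul, log_pmul_mul]
      ring

theorem logDerivation_apply (f : ArithmeticFunction ℝ) : logDerivation f = log.pmul f := rfl

theorem logDerivation_zeta : logDerivation (ζ : ArithmeticFunction ℝ) = log := by
  rw [logDerivation_apply, pmul_comm, zeta_pmul]

theorem logDerivation_moebius : logDerivation (μ : ArithmeticFunction ℝ) = -(Λ * μ) := by
  have h : (ζ : ArithmeticFunction ℝ) * logDerivation μ = -(μ * log) := by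
    refine eq_neg_of_add_eq_zero_right ?_
    rw [← smul_eq_mul, ← smul_eq_mul, ← logDerivation_zeta, ← Derivation.leibniz,
      coe_moebius_mul_coe_zeta, Derivation.map_one_eq_zero]
  calc logDerivation (μ : ArithmeticFunction ℝ)
      = μ * (ζ * logDerivation μ) := by rw [← mul_assoc, coe_moebius_mul_coe_zeta, one_mul]
    _ = -(Λ * μ) := by rw [h, moebius_mul_log_eq_vonMangoldt, mul_neg, mul_comm]

theorem logDerivation_ppow_log (k : ℕ) : logDerivation (log.ppow k) = log.ppow (k + 1) := by
  rw [logDerivation_apply, ppow_succ']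

end ArithmeticFunction

theorem genVonMangoldt_succ (k : ℕ) :
    genVonMangoldt (k + 1) = logDerivation (genVonMangoldt k) + Λ * genVonMangoldt k := by
  simp only [genVonMangoldt, ← logDerivation_ppow_log, Derivation.leibniz, logDerivation_moebius,
    smul_eq_mul]
  ring

theorem logPowVonMangoldt_apply (j n : ℕ) :
    logPowVonMangoldt j n = Real.log n ^ j * Λ n := rfl

theorem logPowVonMangoldt_zero : logPowVonMangoldt 0 = Λ := by
  ext n; simp [logPowVonMangoldt]

theorem logDerivation_logPowVonMangoldt (j : ℕ) :
    logDerivation (logPowVonMangoldt j) = logPowVonMangoldt (j + 1) := by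
  rw [logDerivation_apply]
  ext n
  rw [pmul_apply, log_apply, logPowVonMangoldt_apply, logPowVonMangoldt_apply, pow_succ', mul_assoc]

def logPowVonMangoldtProds (k : ℕ) : Set (ArithmeticFunction ℝ) :=
  {f | ∃ (R : ℕ) (j : Fin R → ℕ), 1 ≤ R ∧ R ≤ k ∧ f = ∏ r, logPowVonMangoldt (j r)}

theorem logPowVonMangoldtProds_mono {k l : ℕ} (h : k ≤ l) :
    logPowVonMangoldtProds k ⊆ logPowVonMangoldtProds l :=
  fun _ ⟨R, j, h₁, h₂, hf⟩ => ⟨R, j, h₁, h₂.trans h, hf⟩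

theorem prod_mem_logPowVonMangoldtProds {R : ℕ} (j : Fin (R + 1) → ℕ) :
    ∏ r, logPowVonMangoldt (j r) ∈ logPowVonMangoldtProds (R + 1) :=
  ⟨R + 1, j, R.succ_pos, le_rfl, rfl⟩

theorem logPowVonMangoldt_mul_mem_span {k : ℕ} (a : ℕ) {f : ArithmeticFunction ℝ}
    (hf : f ∈ Submodule.span ℤ (logPowVonMangoldtProds k)) :
    logPowVonMangoldt a * f ∈ Submodule.span ℤ (logPowVonMangoldtProds (k + 1)) := by
  induction hf using Submodule.span_induction with
  | mem f hf =>
    obtain ⟨R, j, h₁, h₂, rfl⟩ := hf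
    refine Submodule.subset_span ⟨R + 1, Fin.cons a j, R.succ_pos, by omega, ?_⟩
    rw [Fin.prod_univ_succ]
    simp
  | zero => simp
  | add f g _ _ hf hg => rw [mul_add]; exact add_mem hf hg
  | smul c f _ hf => rw [mul_smul_comm]; exact Submodule.smul_mem _ c hf

theorem logDerivation_prod_mem_span (R : ℕ) (j : Fin R → ℕ) :
    logDerivation (∏ r, logPowVonMangoldt (j r)) ∈
      Submodule.span ℤ (logPowVonMangoldtProds R) := by
  induction R with
  | zero => simp
  | succ R ih =>
    rw [Fin.prod_univ_succ, Derivation.leibniz, smul_eq_mul, smul_eq_mul,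
      logDerivation_logPowVonMangoldt]
    refine add_mem (logPowVonMangoldt_mul_mem_span _ (ih _)) (Submodule.subset_span ?_)
    convert prod_mem_logPowVonMangoldtProds (Fin.cons (j 0 + 1) (Fin.tail j)) using 1
    rw [Fin.prod_univ_succ, mul_comm]
    rfl

theorem logDerivation_mem_span {k : ℕ} {f : ArithmeticFunction ℝ}
    (hf : f ∈ Submodule.span ℤ (logPowVonMangoldtProds k)) :
    logDerivation f ∈ Submodule.span ℤ (logPowVonMangoldtProds k) := by
  induction hf using Submodule.span_induction with
  | mem f hf =>
    obtain ⟨R, j, -, hR, rfl⟩ := hf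
    exact Submodule.span_mono (logPowVonMangoldtProds_mono hR) (logDerivation_prod_mem_span R j)
  | zero => simp
  | add f g _ _ hf hg => rw [map_add]; exact add_mem hf hg
  | smul c f _ hf => rw [map_zsmul]; exact Submodule.smul_mem _ c hf

theorem genVonMangoldt_mem_span {k : ℕ} (hk : 1 ≤ k) :
    genVonMangoldt k ∈ Submodule.span ℤ (logPowVonMangoldtProds k) := by
  induction k, hk using Nat.le_induction with
  | base =>
    refine Submodule.subset_span ⟨1, fun _ => 0, le_rfl, le_rfl, ?_⟩
    rw [Fin.prod_univ_one, logPowVonMangoldt_zero, genVonMangoldt, ArithmeticFunction.ppow_one,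
      moebius_mul_log_eq_vonMangoldt]
  | succ k _ ih =>
    rw [genVonMangoldt_succ]
    refine add_mem (Submodule.span_mono (logPowVonMangoldtProds_mono k.le_succ) ?_) ?_
    · exact logDerivation_mem_span ih
    · simpa only [logPowVonMangoldt_zero] using logPowVonMangoldt_mul_mem_span 0 ih

/-- For every `k ≥ 1`, `Λ_k` is a finite integer linear combination of
Dirichlet convolutions `(log^{j_1}Λ) ⋆ ⋯ ⋆ (log^{j_R}Λ)` with `1 ≤ R ≤ k`
and nonnegative integers `j_1, …, j_R`. -/
theorem genVonMangoldt_linear_combination (k : ℕ) (hk : 1 ≤ k) :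
    ∃ (I : ℕ) (c : Fin I → ℤ) (R : Fin I → ℕ)
      (j : (t : Fin I) → Fin (R t) → ℕ),
      (∀ t : Fin I, 1 ≤ R t ∧ R t ≤ k) ∧
      ∀ n : ℕ,
        genVonMangoldt k n =
          ∑ t : Fin I,
            (c t : ℝ) * (∏ r : Fin (R t), logPowVonMangoldt (j t r)) n := by
  obtain ⟨I, c, g, hsum⟩ := Submodule.mem_span_set'.mp (genVonMangoldt_mem_span hk)
  choose R j hR₁ hR₂ hg using fun t => (g t).2
  refine ⟨I, c, R, j, fun t => ⟨hR₁ t, hR₂ t⟩, fun n => ?_⟩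
  simp only [← hsum, ArithmeticFunction.sum_apply, hg, ← Int.cast_smul_eq_zsmul ℝ, smul_map,
    smul_eq_mul]
end

section
/- Suppose h, d, n are positive integers with n coprime to d·h, and f_1, …, f_R are arithmetic functions each supported on prime powers. Then (μ ⋆ f_1 ⋆ ⋯ ⋆ f_R)(dhn) = ∑ over ways to split {1,…,R} into a set S (the indices i with the variable ℓ_i dividing dh) and its complement, of (μ ⋆ f_{i_1} ⋆ ⋯ ⋆ f_{i_s})(dh) · (μ ⋆ f_{i_{s+1}} ⋆ ⋯ ⋆ f_{i_R})(n), where (i_1,…,i_s) enumerates S and (i_{s+1},…,i_R) its complement. -/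
/-!
Divisors of `m * n` with `m, n` coprime are exactly the products `d * e` with `d ∣ m`, `e ∣ n`,
so a Dirichlet convolution evaluated at `m * n` becomes a double sum over such pairs. A function
supported on prime powers sees a coprime pair `(a, b)` only when `a = 1` or `b = 1`, so convolving
with it acts on exactly one of the two variables. Inducting on the factors `f i`, each one is sent
either to the `m`-side or to the `n`-side, which produces the sum over subsets `S`; the base case
is the multiplicativity of `μ`.
-/

open ArithmeticFunction Finset

namespace ArithmeticFunction

variable {R : Type*}

def SupportedOnPrimePowers [Zero R] (g : ArithmeticFunction R) : Prop :=
  ∀ m, ¬IsPrimePow m → g m = 0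

theorem mul_apply_eq_sum_divisors [Semiring R] (F G : ArithmeticFunction R) (n : ℕ) :
    (F * G) n = ∑ d ∈ n.divisors, F d * G (n / d) := by
  rw [mul_apply, Nat.sum_divisorsAntidiagonal fun x y ↦ F x * G y]

theorem mul_apply_mul_of_coprime [Semiring R] (F G : ArithmeticFunction R) {m n : ℕ}
    (hmn : m.Coprime n) :
    (F * G) (m * n) =
      ∑ d ∈ m.divisors, ∑ e ∈ n.divisors, F (d * e) * G (m / d * (n / e)) := by
  rw [mul_apply_eq_sum_divisors, Nat.divisors_mul, mul_def, sum_image hmn.mul_injOn_divisors,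
    sum_product]
  refine sum_congr rfl fun d hd ↦ sum_congr rfl fun e he ↦ ?_
  rw [Nat.div_mul_div_comm (Nat.dvd_of_mem_divisors hd) (Nat.dvd_of_mem_divisors he)]

namespace SupportedOnPrimePowers

theorem apply_mul_of_coprime [AddMonoid R] {g : ArithmeticFunction R}
    (hg : g.SupportedOnPrimePowers) {x y : ℕ} (hxy : x.Coprime y) :
    g (x * y) = (if y = 1 then g x else 0) + (if x = 1 then g y else 0) := by
  have hg1 : g 1 = 0 := hg 1 not_isPrimePow_one
  rcases eq_or_ne y 1 with rfl | hy
  · rcases eq_or_ne x 1 with rfl | hx <;> simp [*]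
  rcases eq_or_ne x 1 with rfl | hx
  · simp [hy]
  rw [if_neg hy, if_neg hx, add_zero, hg]
  intro hxy_pow
  rcases (hxy.isPrimePow_dvd_mul hxy_pow).mp dvd_rfl with h | h
  · exact hy (hxy.symm.eq_one_of_dvd ((dvd_mul_left y x).trans h))
  · exact hx (hxy.eq_one_of_dvd ((dvd_mul_right x y).trans h))

theorem mul_apply_mul_of_coprime [Semiring R] (G : ArithmeticFunction R)
    {g : ArithmeticFunction R} (hg : g.SupportedOnPrimePowers) {m n : ℕ} (hmn : m.Coprime n)
    (hm : m ≠ 0) (hn : n ≠ 0) :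
    (G * g) (m * n) =
      ∑ d ∈ m.divisors, G (d * n) * g (m / d) + ∑ e ∈ n.divisors, G (m * e) * g (n / e) := by
  have div_eq_one_iff {a b : ℕ} (h : b ∈ a.divisors) : a / b = 1 ↔ b = a := by
    rw [Nat.div_eq_iff_eq_mul_left (Nat.pos_of_mem_divisors h) (Nat.dvd_of_mem_divisors h),
      one_mul, eq_comm]
  have hsplit : ∀ d ∈ m.divisors, ∀ e ∈ n.divisors, G (d * e) * g (m / d * (n / e)) =
      (if e = n then G (d * n) * g (m / d) else 0) +
        (if d = m then G (m * e) * g (n / e) else 0) := by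
    intro d hd e he
    have hcop : (m / d).Coprime (n / e) :=
      (hmn.coprime_dvd_left (Nat.div_dvd_of_dvd (Nat.dvd_of_mem_divisors hd))).coprime_dvd_right
      (Nat.div_dvd_of_dvd (Nat.dvd_of_mem_divisors he))
    rw [hg.apply_mul_of_coprime hcop, mul_add]
    simp only [div_eq_one_iff hd, div_eq_one_iff he, mul_ite, mul_zero]
    split_ifs <;> subst_vars <;> simp
  rw [ArithmeticFunction.mul_apply_mul_of_coprime G g hmn,
    sum_congr rfl fun d hd ↦ sum_congr rfl (hsplit d hd)]
  simp only [sum_add_distrib, sum_ite_eq', Nat.mem_divisors_self _ hn, if_true]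
  rw [sum_comm]
  simp only [sum_ite_eq', Nat.mem_divisors_self _ hm, if_true]

end SupportedOnPrimePowers

theorem IsMultiplicative.mul_prod_apply_mul_of_coprime [CommSemiring R] {ι : Type*}
    [DecidableEq ι] {F : ArithmeticFunction R} (hF : F.IsMultiplicative)
    {f : ι → ArithmeticFunction R} (hf : ∀ i, (f i).SupportedOnPrimePowers) (T : Finset ι)
    {m n : ℕ} (hmn : m.Coprime n) :
    (F * ∏ i ∈ T, f i) (m * n) =
      ∑ S ∈ T.powerset, (F * ∏ i ∈ S, f i) m * (F * ∏ i ∈ T \ S, f i) n := by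
  rcases eq_or_ne m 0 with rfl | hm
  · simp
  rcases eq_or_ne n 0 with rfl | hn
  · simp
  induction T using Finset.induction_on generalizing m n with
  | empty =>
    simp only [prod_empty, mul_one, powerset_empty, sum_singleton, sdiff_empty]
    exact hF.map_mul_of_coprime hmn
  | insert j T hj ih =>
    have prod_insert_eq : ∀ S, j ∉ S → F * ∏ i ∈ insert j S, f i = (F * ∏ i ∈ S, f i) * f j :=
      fun S hS ↦ by rw [prod_insert hS]; ring
    have hjS : ∀ S ∈ T.powerset, j ∉ S := fun S hS hjS ↦ hj (mem_powerset.mp hS hjS)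
    -- The `n`-side part of `f j` gives the subsets without `j`, the `m`-side part those with `j`.
    rw [prod_insert_eq T hj, (hf j).mul_apply_mul_of_coprime _ hmn hm hn, add_comm,
      sum_powerset_insert hj]
    congr 1
    · calc _ = ∑ S ∈ T.powerset, ∑ e ∈ n.divisors,
              (F * ∏ i ∈ S, f i) m * ((F * ∏ i ∈ T \ S, f i) e * f j (n / e)) := by
            rw [sum_comm]
            refine sum_congr rfl fun e he ↦ ?_
            have he₀ : e ≠ 0 := (Nat.pos_of_mem_divisors he).ne'
            rw [ih (hmn.coprime_dvd_right (Nat.dvd_of_mem_divisors he)) hm he₀, sum_mul]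
            simp only [mul_assoc]
        _ = _ := sum_congr rfl fun S hS ↦ by
            rw [insert_sdiff_of_notMem _ (hjS S hS),
              prod_insert_eq _ fun h ↦ hj (mem_sdiff.mp h).1, mul_apply_eq_sum_divisors _ (f j),
              mul_sum]
    · calc _ = ∑ S ∈ T.powerset, ∑ d ∈ m.divisors,
              (F * ∏ i ∈ S, f i) d * f j (m / d) * (F * ∏ i ∈ T \ S, f i) n := by
            rw [sum_comm]
            refine sum_congr rfl fun d hd ↦ ?_
            have hd₀ : d ≠ 0 := (Nat.pos_of_mem_divisors hd).ne'
            rw [ih (hmn.coprime_dvd_left (Nat.dvd_of_mem_divisors hd)) hd₀ hn, sum_mul]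
            exact sum_congr rfl fun S _ ↦ by ring
        _ = _ := sum_congr rfl fun S hS ↦ by
            rw [insert_sdiff_insert, sdiff_insert_of_notMem hj, prod_insert_eq S (hjS S hS),
              mul_apply_eq_sum_divisors _ (f j), sum_mul]

end ArithmeticFunction

theorem moebius_conv_separation_general (R : ℕ) (f : Fin R → ArithmeticFunction ℝ)
    (hf : ∀ i : Fin R, ∀ m : ℕ, ¬ IsPrimePow m → f i m = 0)
    (d h n : ℕ)
    (hcop : Nat.Coprime n (d * h)) :
    ((↑(ArithmeticFunction.moebius) : ArithmeticFunction ℝ) * ∏ i : Fin R, f i)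
        (d * h * n) =
      ∑ S : Finset (Fin R),
        ((↑(ArithmeticFunction.moebius) : ArithmeticFunction ℝ) * ∏ i ∈ S, f i)
            (d * h) *
          ((↑(ArithmeticFunction.moebius) : ArithmeticFunction ℝ) * ∏ i ∈ Sᶜ, f i)
            n := by
  rw [isMultiplicative_moebius.intCast.mul_prod_apply_mul_of_coprime hf univ hcop.symm,
    powerset_univ]
  simp only [compl_eq_univ_sdiff]

/-- Variable separation for Dirichlet convolutions against `μ` at coprime
arguments: if each `f i` is supported on prime powers and `n` is coprime to
`d·h`, then
`(μ ⋆ f_1 ⋆ ⋯ ⋆ f_R)(dhn) = ∑_{S ⊆ {1,…,R}} (μ ⋆ ∏_{i∈S} f_i)(dh) · (μ ⋆ ∏_{i∉S} f_i)(n)`. -/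
theorem moebius_conv_separation (R : ℕ) (f : Fin R → ArithmeticFunction ℝ)
    (hf : ∀ i : Fin R, ∀ m : ℕ, ¬ IsPrimePow m → f i m = 0)
    (d h n : ℕ) (hd : 0 < d) (hh : 0 < h) (hn : 0 < n)
    (hcop : Nat.Coprime n (d * h)) :
    ((↑(ArithmeticFunction.moebius) : ArithmeticFunction ℝ) * ∏ i : Fin R, f i)
        (d * h * n) =
      ∑ S : Finset (Fin R),
        ((↑(ArithmeticFunction.moebius) : ArithmeticFunction ℝ) * ∏ i ∈ S, f i)
            (d * h) *
          ((↑(ArithmeticFunction.moebius) : ArithmeticFunction ℝ) * ∏ i ∈ Sᶜ, f i)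
            n :=
  moebius_conv_separation_general R f hf d h n hcop
end

section
/- For each prime p and complex numbers α, β, γ, δ with Re(α+β), Re(β+γ), Re(α+δ), Re(γ+δ) > −1, the Euler factor identity holds: ∑_{h,k ∈ {0,1}} ∑_{m,n ≥ 0, h+m=k+n} μ(p^h)μ(p^k) p^{−(1/2+α)m−(1/2+β)n−(1/2+γ)h−(1/2+δ)k} = (1−p^{−1−α−β})^{−1} (1 − p^{−1−β−γ} − p^{−1−α−δ} + p^{−1−γ−δ}). -/
open ArithmeticFunction

private lemma tsum_diag_aux (a b C : ℂ) (hr : ‖a * b‖ < 1) :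
    (∑' m : ℕ, ∑' n : ℕ, if m = n then C * a ^ m * b ^ n else 0)
      = C * (1 - a * b)⁻¹ := by
  have h1 : ∀ m : ℕ, (∑' n : ℕ, if m = n then C * a ^ m * b ^ n else 0)
      = C * (a * b) ^ m := by
    intro m
    rw [tsum_eq_single m (fun n hn => if_neg (fun h => hn h.symm))]
    rw [if_pos rfl, mul_pow]; ring
  simp only [h1]
  rw [tsum_mul_left, tsum_geometric_of_norm_lt_one hr]

private lemma tsum_shiftn_aux (a b C : ℂ) (hr : ‖a * b‖ < 1) :
    (∑' m : ℕ, ∑' n : ℕ, if n = m + 1 then C * a ^ m * b ^ n else 0)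
      = C * b * (1 - a * b)⁻¹ := by
  have h1 : ∀ m : ℕ, (∑' n : ℕ, if n = m + 1 then C * a ^ m * b ^ n else 0)
      = C * b * (a * b) ^ m := by
    intro m
    rw [tsum_eq_single (m + 1) (fun n hn => if_neg hn), if_pos rfl, mul_pow,
      pow_succ]
    ring
  simp only [h1]
  rw [tsum_mul_left, tsum_geometric_of_norm_lt_one hr]

private lemma tsum_shiftm_aux (a b C : ℂ) (hr : ‖a * b‖ < 1) :
    (∑' m : ℕ, ∑' n : ℕ, if m = n + 1 then C * a ^ m * b ^ n else 0)
      = C * a * (1 - a * b)⁻¹ := by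
  have h1 : ∀ m : ℕ, (∑' n : ℕ, if m = n + 1 then C * a ^ m * b ^ n else 0)
      = (if m = 0 then 0 else C * a * (a * b) ^ (m - 1)) := by
    intro m
    cases m with
    | zero => simp
    | succ j =>
        rw [tsum_eq_single j (fun n hn => if_neg (by omega)), if_pos rfl,
          if_neg (Nat.succ_ne_zero j), Nat.succ_sub_one, mul_pow, pow_succ]
        ring
  rw [tsum_congr h1]
  have hshift : ∀ j : ℕ, (if j + 1 = 0 then (0:ℂ) else C * a * (a * b) ^ (j + 1 - 1))
      = C * a * (a * b) ^ j := by
    intro j; simp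
  have hsumm : Summable (fun m : ℕ => if m = 0 then (0:ℂ) else C * a * (a * b) ^ (m - 1)) := by
    rw [← summable_nat_add_iff 1]
    simp only [hshift]
    exact ((summable_geometric_of_norm_lt_one hr).mul_left _)
  rw [Summable.tsum_eq_zero_add hsumm, tsum_congr hshift, if_pos rfl, zero_add,
    tsum_mul_left, tsum_geometric_of_norm_lt_one hr]

/-- Euler factor identity: for a prime `p` and complex `α, β, γ, δ` with
`Re(1+α+β), Re(1+β+γ), Re(1+α+δ), Re(1+γ+δ) > 0`,
`∑_{h,k ∈ {0,1}} ∑_{m,n ≥ 0, h+m=k+n} μ(p^h)μ(p^k)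
   p^{−(1/2+α)m−(1/2+β)n−(1/2+γ)h−(1/2+δ)k}
 = (1−p^{−1−α−β})^{−1} (1 − p^{−1−β−γ} − p^{−1−α−δ} + p^{−1−γ−δ})`. -/
theorem euler_factor_identity (p : ℕ) (hp : p.Prime) (α β γ δ : ℂ)
    (h1 : 0 < (1 + α + β).re) (h2 : 0 < (1 + β + γ).re)
    (h3 : 0 < (1 + α + δ).re) (h4 : 0 < (1 + γ + δ).re) :
    (∑' h : Fin 2, ∑' k : Fin 2, ∑' m : ℕ, ∑' n : ℕ,
        if (h : ℕ) + m = (k : ℕ) + n then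
          (ArithmeticFunction.moebius (p ^ (h : ℕ)) : ℂ) *
            (ArithmeticFunction.moebius (p ^ (k : ℕ)) : ℂ) *
            (p : ℂ) ^ (-((1 / 2 + α) * (m : ℂ) + (1 / 2 + β) * (n : ℂ) +
              (1 / 2 + γ) * ((h : ℕ) : ℂ) + (1 / 2 + δ) * ((k : ℕ) : ℂ)))
        else 0) =
      (1 - (p : ℂ) ^ (-(1 + α + β)))⁻¹ *
        (1 - (p : ℂ) ^ (-(1 + β + γ)) - (p : ℂ) ^ (-(1 + α + δ)) +
          (p : ℂ) ^ (-(1 + γ + δ))) := by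
  have hp0 : (p : ℂ) ≠ 0 := Nat.cast_ne_zero.mpr hp.pos.ne'
  have hppos : (0 : ℝ) < (p : ℝ) := Nat.cast_pos.mpr hp.pos
  have hp1 : (1 : ℝ) < (p : ℝ) := by exact_mod_cast hp.one_lt
  -- the four basic quantities
  set a : ℂ := (p : ℂ) ^ (-(1 / 2 + α)) with ha
  set b : ℂ := (p : ℂ) ^ (-(1 / 2 + β)) with hb
  set c : ℂ := (p : ℂ) ^ (-(1 / 2 + γ)) with hc
  set d : ℂ := (p : ℂ) ^ (-(1 / 2 + δ)) with hd
  have hmul : ∀ x y : ℂ, (p : ℂ) ^ (-(1 / 2 + x)) * (p : ℂ) ^ (-(1 / 2 + y))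
      = (p : ℂ) ^ (-(1 + x + y)) := by
    intro x y
    rw [← Complex.cpow_add _ _ hp0]
    ring_nf
  have hab : a * b = (p : ℂ) ^ (-(1 + α + β)) := hmul α β
  have hcb : c * b = (p : ℂ) ^ (-(1 + β + γ)) := by rw [mul_comm]; exact hmul β γ
  have had : a * d = (p : ℂ) ^ (-(1 + α + δ)) := hmul α δ
  have hcd : c * d = (p : ℂ) ^ (-(1 + γ + δ)) := hmul γ δ
  have hr : ‖a * b‖ < 1 := by
    rw [hab, ← Complex.ofReal_natCast,
      Complex.norm_cpow_eq_rpow_re_of_pos hppos]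
    apply Real.rpow_lt_one_of_one_lt_of_neg hp1
    rw [Complex.neg_re]
    linarith
  -- expand the power
  have hpow : ∀ (h k m n : ℕ),
      (p : ℂ) ^ (-((1 / 2 + α) * (m : ℂ) + (1 / 2 + β) * (n : ℂ) +
        (1 / 2 + γ) * (h : ℂ) + (1 / 2 + δ) * (k : ℂ)))
      = c ^ h * d ^ k * a ^ m * b ^ n := by
    intro h k m n
    have : (-((1 / 2 + α) * (m : ℂ) + (1 / 2 + β) * (n : ℂ) +
        (1 / 2 + γ) * (h : ℂ) + (1 / 2 + δ) * (k : ℂ)))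
        = (h : ℂ) * (-(1 / 2 + γ)) + ((k : ℂ) * (-(1 / 2 + δ)) +
          ((m : ℂ) * (-(1 / 2 + α)) + (n : ℂ) * (-(1 / 2 + β)))) := by ring
    rw [this, Complex.cpow_add _ _ hp0, Complex.cpow_add _ _ hp0,
      Complex.cpow_add _ _ hp0, Complex.cpow_nat_mul, Complex.cpow_nat_mul,
      Complex.cpow_nat_mul, Complex.cpow_nat_mul, ← ha, ← hb, ← hc, ← hd]
    ring
  simp only [tsum_fintype, Fin.sum_univ_two]
  have hmu0 : (ArithmeticFunction.moebius (p ^ (0 : ℕ)) : ℂ) = 1 := by simp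
  have hmu1 : (ArithmeticFunction.moebius (p ^ (1 : ℕ)) : ℂ) = -1 := by
    rw [pow_one, moebius_apply_prime hp]; norm_num
  -- case (0,0)
  have case00 : (∑' m : ℕ, ∑' n : ℕ,
      if (0 : ℕ) + m = (0 : ℕ) + n then
        (ArithmeticFunction.moebius (p ^ (0 : ℕ)) : ℂ) *
          (ArithmeticFunction.moebius (p ^ (0 : ℕ)) : ℂ) *
          (p : ℂ) ^ (-((1 / 2 + α) * (m : ℂ) + (1 / 2 + β) * (n : ℂ) +
            (1 / 2 + γ) * ((0 : ℕ) : ℂ) + (1 / 2 + δ) * ((0 : ℕ) : ℂ)))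
      else 0) = 1 * (1 - a * b)⁻¹ := by
    rw [← tsum_diag_aux a b 1 hr]
    congr 1; ext m; congr 1; ext n
    rw [hpow 0 0 m n, hmu0]
    simp
  -- case (0,1) : 0 + m = 1 + n, i.e. m = n + 1
  have case01 : (∑' m : ℕ, ∑' n : ℕ,
      if (0 : ℕ) + m = (1 : ℕ) + n then
        (ArithmeticFunction.moebius (p ^ (0 : ℕ)) : ℂ) *
          (ArithmeticFunction.moebius (p ^ (1 : ℕ)) : ℂ) *
          (p : ℂ) ^ (-((1 / 2 + α) * (m : ℂ) + (1 / 2 + β) * (n : ℂ) +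
            (1 / 2 + γ) * ((0 : ℕ) : ℂ) + (1 / 2 + δ) * ((1 : ℕ) : ℂ)))
      else 0) = (-d) * a * (1 - a * b)⁻¹ := by
    rw [← tsum_shiftm_aux a b (-d) hr]
    congr 1; ext m; congr 1; ext n
    by_cases h : (0 : ℕ) + m = 1 + n
    · rw [if_pos h, if_pos (by omega : m = n + 1), hpow 0 1 m n, hmu0, hmu1]; ring
    · rw [if_neg h, if_neg (by omega : ¬ m = n + 1)]
  -- case (1,0) : 1 + m = 0 + n, i.e. n = m + 1
  have case10 : (∑' m : ℕ, ∑' n : ℕ,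
      if (1 : ℕ) + m = (0 : ℕ) + n then
        (ArithmeticFunction.moebius (p ^ (1 : ℕ)) : ℂ) *
          (ArithmeticFunction.moebius (p ^ (0 : ℕ)) : ℂ) *
          (p : ℂ) ^ (-((1 / 2 + α) * (m : ℂ) + (1 / 2 + β) * (n : ℂ) +
            (1 / 2 + γ) * ((1 : ℕ) : ℂ) + (1 / 2 + δ) * ((0 : ℕ) : ℂ)))
      else 0) = (-c) * b * (1 - a * b)⁻¹ := by
    rw [← tsum_shiftn_aux a b (-c) hr]
    congr 1; ext m; congr 1; ext n
    by_cases h : (1 : ℕ) + m = 0 + n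
    · rw [if_pos h, if_pos (by omega : n = m + 1), hpow 1 0 m n, hmu0, hmu1]; ring
    · rw [if_neg h, if_neg (by omega : ¬ n = m + 1)]
  -- case (1,1)
  have case11 : (∑' m : ℕ, ∑' n : ℕ,
      if (1 : ℕ) + m = (1 : ℕ) + n then
        (ArithmeticFunction.moebius (p ^ (1 : ℕ)) : ℂ) *
          (ArithmeticFunction.moebius (p ^ (1 : ℕ)) : ℂ) *
          (p : ℂ) ^ (-((1 / 2 + α) * (m : ℂ) + (1 / 2 + β) * (n : ℂ) +
            (1 / 2 + γ) * ((1 : ℕ) : ℂ) + (1 / 2 + δ) * ((1 : ℕ) : ℂ)))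
      else 0) = (c * d) * (1 - a * b)⁻¹ := by
    rw [← tsum_diag_aux a b (c * d) hr]
    congr 1; ext m; congr 1; ext n
    by_cases h : (1 : ℕ) + m = 1 + n
    · rw [if_pos h, if_pos (by omega : m = n), hpow 1 1 m n, hmu1]; ring
    · rw [if_neg h, if_neg (by omega : ¬ m = n)]
  simp only [Fin.val_zero, Fin.val_one] at *
  rw [case00, case01, case10, case11, ← hab, ← hcb, ← had, ← hcd]
  ring
end
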